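/- Let S be a discrete set, X a Banach space, and Φ = ∑_{i=1}^∞ α_i (δ_{k_i} ⊗ x_i*) ∈ C(βS, X)*_1 with α_i ∈ (0,1], ∑ α_i = 1, k_i ∈ S distinct, and x_i* ∈ S(X*). Suppose there is a countable set A = {x_j : j ∈ ℕ} ⊆ X_1 whose norm closure is compact such that every x_i* attains its norm on A (i.e., for each i there is j with x_i*(x_j) = 1). Then Φ attains its norm on the unit sphere of C(βS, X). -/

import Mathlib

open NormedSpace Filter Topology

/-- The functional `δ_ω ⊗ x* : f ↦ x*(f ω)` on `C(Ω, X)`. -/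
noncomputable def deltaTensor {Ω : Type*} [TopologicalSpace Ω] [CompactSpace Ω]
    {X : Type*} [NormedAddCommGroup X] [NormedSpace ℝ X]
    (ω : Ω) (x : StrongDual ℝ X) : StrongDual ℝ C(Ω, X) :=
  LinearMap.mkContinuous
    { toFun := fun f : C(Ω, X) => x (f ω)
      map_add' := fun f g => by simp
      map_smul' := fun c f => by simp }
    ‖x‖ (fun f => by
      calc ‖x (f ω)‖ ≤ ‖x‖ * ‖f ω‖ := x.le_opNorm _
        _ ≤ ‖x‖ * ‖f‖ :=
          mul_le_mul_of_nonneg_left (f.norm_coe_le_norm ω) (norm_nonneg x))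

/-! The test function is `f = β g`, where `g : S → X` sends `k_i` to a point `x_{j(i)} ∈ A` at
which `x_i*` attains its norm.  Since `g` takes values in the compact set `closure A`, it extends
continuously to `βS` without leaving the unit ball; then `Φ f = ∑ α_i x_i*(x_{j(i)}) = ∑ α_i = 1`,
and `‖Φ‖ ≤ 1` forces `‖f‖ = 1`. -/

@[simp]
theorem deltaTensor_apply {Ω : Type*} [TopologicalSpace Ω] [CompactSpace Ω]
    {X : Type*} [NormedAddCommGroup X] [NormedSpace ℝ X]
    (ω : Ω) (x : StrongDual ℝ X) (f : C(Ω, X)) : deltaTensor ω x f = x (f ω) :=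
  rfl

section StoneCech

variable {S : Type*} [TopologicalSpace S] [DiscreteTopology S]
  {X : Type*} [TopologicalSpace X] [T2Space X] {K : Set X}

theorem exists_continuousMap_stoneCech_extend_mapsTo (hK : IsCompact K) (g : S → X)
    (hg : ∀ s, g s ∈ K) :
    ∃ f : C(StoneCech S, X), (∀ s, f (stoneCechUnit s) = g s) ∧ ∀ ω, f ω ∈ K := by
  have : CompactSpace K := isCompact_iff_compactSpace.mp hK
  have hgK : Continuous (fun s => (⟨g s, hg s⟩ : K)) := continuous_of_discreteTopology
  refine ⟨⟨Subtype.val ∘ stoneCechExtend hgK,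
    continuous_subtype_val.comp (continuous_stoneCechExtend hgK)⟩, fun s => ?_,
    fun ω => (stoneCechExtend hgK ω).2⟩
  exact congrArg Subtype.val (congrFun (stoneCechExtend_extends hgK) s)

theorem exists_continuousMap_stoneCech_interpolate {ι : Type*} (hK : IsCompact K)
    (hKne : K.Nonempty) {k : ι → S} (hk : Function.Injective k) {y : ι → X}
    (hy : ∀ i, y i ∈ K) :
    ∃ f : C(StoneCech S, X), (∀ i, f (stoneCechUnit (k i)) = y i) ∧ ∀ ω, f ω ∈ K := by
  obtain ⟨y₀, hy₀⟩ := hKne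
  have hg : ∀ s, Function.extend k y (fun _ => y₀) s ∈ K := fun s => by
    by_cases hs : ∃ i, k i = s
    · obtain ⟨i, rfl⟩ := hs
      simpa [hk.extend_apply] using hy i
    · simpa [Function.extend_apply' _ _ _ hs] using hy₀
  obtain ⟨f, hf_ext, hf_K⟩ := exists_continuousMap_stoneCech_extend_mapsTo hK _ hg
  exact ⟨f, fun i => by rw [hf_ext, hk.extend_apply], hf_K⟩

end StoneCech

theorem StrongDual.norm_eq_one_of_apply_eq_one {E : Type*} [SeminormedAddCommGroup E]
    [NormedSpace ℝ E] {φ : StrongDual ℝ E} (hφ : ‖φ‖ ≤ 1) {f : E} (hf : ‖f‖ ≤ 1)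
    (hφf : φ f = 1) : ‖f‖ = 1 := by
  refine le_antisymm hf ?_
  calc (1 : ℝ) = ‖φ f‖ := by rw [hφf, norm_one]
    _ ≤ ‖φ‖ * ‖f‖ := φ.le_opNorm f
    _ ≤ 1 * ‖f‖ := mul_le_mul_of_nonneg_right hφ (norm_nonneg f)
    _ = ‖f‖ := one_mul _

theorem norm_attains_on_stoneCech_general
    {S : Type*} [TopologicalSpace S] [DiscreteTopology S]
    {X : Type*} [NormedAddCommGroup X] [NormedSpace ℝ X]
    (Φ : StrongDual ℝ C(StoneCech S, X)) (hΦball : ‖Φ‖ ≤ 1)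
    (α : ℕ → ℝ) (hαsum : HasSum α 1)
    (k : ℕ → S) (hk : Function.Injective k)
    (x : ℕ → StrongDual ℝ X)
    (hrep : ∀ f : C(StoneCech S, X),
      Φ f = ∑' i, α i * (deltaTensor (stoneCechUnit (k i)) (x i)) f)
    (A : ℕ → X) (hA : ∀ j, ‖A j‖ ≤ 1)
    (hAcpt : IsCompact (closure (Set.range A)))
    (hatt : ∀ i, ∃ j, (x i) (A j) = 1) :
    ∃ f : C(StoneCech S, X), ‖f‖ = 1 ∧ Φ f = 1 := by
  choose j hj using hatt
  have hA_ball : closure (Set.range A) ⊆ Metric.closedBall 0 1 :=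
    closure_minimal (by rintro _ ⟨n, rfl⟩; simpa using hA n) Metric.isClosed_closedBall
  obtain ⟨f, hf_k, hf_K⟩ := exists_continuousMap_stoneCech_interpolate hAcpt
    ⟨A 0, subset_closure ⟨0, rfl⟩⟩ hk (y := A ∘ j) fun i => subset_closure ⟨j i, rfl⟩
  have hf_norm : ‖f‖ ≤ 1 :=
    (f.norm_le zero_le_one).2 fun ω => by simpa using hA_ball (hf_K ω)
  have hΦf : Φ f = 1 := by
    rw [hrep, ← hαsum.tsum_eq]
    exact tsum_congr fun i => by
      rw [deltaTensor_apply, hf_k, Function.comp_apply, hj, mul_one]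
  exact ⟨f, StrongDual.norm_eq_one_of_apply_eq_one hΦball hf_norm hΦf, hΦf⟩

/-- **Norm attainment on `C(βS, X)`.**  Let `S` be a discrete set, `βS` its Stone–Čech
compactification, and `Φ = ∑ α_i (δ_{k_i} ⊗ x_i*)` in the dual unit ball of `C(βS, X)`,
with `α_i ∈ (0, 1]`, `∑ α_i = 1`, `k_i ∈ S` distinct and `x_i* ∈ S(X*)`.  If there is a
countable set `A = {x_j : j ∈ ℕ} ⊆ X₁` with norm-compact closure such that each `x_i*`
attains its norm on `A`, then `Φ` attains its norm on the unit sphere of `C(βS, X)`. -/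
theorem norm_attains_on_stoneCech
    {S : Type*} [TopologicalSpace S] [DiscreteTopology S]
    {X : Type*} [NormedAddCommGroup X] [NormedSpace ℝ X] [CompleteSpace X]
    (Φ : StrongDual ℝ C(StoneCech S, X)) (hΦball : ‖Φ‖ ≤ 1)
    (α : ℕ → ℝ) (hα : ∀ i, α i ∈ Set.Ioc (0 : ℝ) 1) (hαsum : HasSum α 1)
    (k : ℕ → S) (hk : Function.Injective k)
    (x : ℕ → StrongDual ℝ X) (hx : ∀ i, ‖x i‖ = 1)
    (hrep : ∀ f : C(StoneCech S, X),
      Φ f = ∑' i, α i * (deltaTensor (stoneCechUnit (k i)) (x i)) f)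
    (A : ℕ → X) (hA : ∀ j, ‖A j‖ ≤ 1)
    (hAcpt : IsCompact (closure (Set.range A)))
    (hatt : ∀ i, ∃ j, (x i) (A j) = 1) :
    ∃ f : C(StoneCech S, X), ‖f‖ = 1 ∧ Φ f = 1 :=
  norm_attains_on_stoneCech_general Φ hΦball α hαsum k hk x hrep A hA hAcpt hatt
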